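/- arXiv:2505.12376 — 4 statements merged into one kernel-verified Lean document; each statement's English description precedes it below -/
import Mathlib

section
/- For every t ≥ 1, the boxicity of the Roberts graph (the complement of a perfect matching on 2t vertices) equals t. -/
def IsIntervalGraph {V : Type*} (G : SimpleGraph V) : Prop :=
  ∃ a b : V → ℝ, ∀ u v : V, u ≠ v →
    (G.Adj u v ↔ (Set.Icc (a u) (b u) ∩ Set.Icc (a v) (b v)).Nonempty)

def IsThresholdGraph {V : Type*} (G : SimpleGraph V) : Prop :=
  ∃ (w : V → ℝ) (S : ℝ), ∀ u v : V, u ≠ v → (G.Adj u v ↔ S ≤ w u + w v)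

noncomputable def boxicity {V : Type*} (G : SimpleGraph V) : ℕ :=
  sInf {d : ℕ | ∃ I : Fin d → SimpleGraph V, (∀ i, IsIntervalGraph (I i)) ∧
    ∀ u v : V, G.Adj u v ↔ (u ≠ v ∧ ∀ i, (I i).Adj u v)}

noncomputable def thresholdDim {V : Type*} (G : SimpleGraph V) : ℕ :=
  sInf {d : ℕ | ∃ I : Fin d → SimpleGraph V, (∀ i, IsThresholdGraph (I i)) ∧
    ∀ u v : V, G.Adj u v ↔ (u ≠ v ∧ ∀ i, (I i).Adj u v)}

def robertsGraph (t : ℕ) : SimpleGraph (Fin t × Fin 2) where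
  Adj u v := u.1 ≠ v.1
  symm := ⟨fun _ _ h => Ne.symm h⟩
  loopless := ⟨fun _ h => h rfl⟩

/-!
The complete graph minus the `i`-th matching edge is an interval graph (the two ends of the
missing edge get the points `0` and `1`, every other vertex gets `[0, 1]`), and the Roberts graph
is the intersection of these `t` graphs, so `box ≤ t`.

Conversely, interval graphs have no induced `4`-cycle: if the intervals `A` and `C` are disjoint,
say `A` lies left of `C`, then every interval meeting both contains the right end of `A`. For
`i ≠ i'` the vertices `(i, 0), (i', 0), (i, 1), (i', 1)` form a `4`-cycle in every interval
supergraph of the Roberts graph, so such a supergraph misses at most one matching edge. As every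
matching edge must be missed by some factor, there are at least `t` factors.
-/

open SimpleGraph Set

section Intervals

variable {α : Type*} [LinearOrder α]

theorem right_mem_Icc_of_inter_nonempty {a b a₁ b₁ a₂ b₂ : α}
    (h₁ : (Icc a₁ b₁ ∩ Icc a b).Nonempty) (h₂ : (Icc a b ∩ Icc a₂ b₂).Nonempty) (h : b₁ ≤ a₂) :
    b₁ ∈ Icc a b := by
  obtain ⟨p, hp₁, hp⟩ := h₁
  obtain ⟨q, hq, hq₂⟩ := h₂
  exact ⟨hp.1.trans hp₁.2, h.trans (hq₂.1.trans hq.2)⟩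

theorem Icc_inter_Icc_nonempty_of_fourCycle {aA bA aB bB aC bC aD bD : α}
    (hAB : (Icc aA bA ∩ Icc aB bB).Nonempty) (hBC : (Icc aB bB ∩ Icc aC bC).Nonempty)
    (hCD : (Icc aC bC ∩ Icc aD bD).Nonempty) (hDA : (Icc aD bD ∩ Icc aA bA).Nonempty)
    (hAC : ¬(Icc aA bA ∩ Icc aC bC).Nonempty) :
    (Icc aB bB ∩ Icc aD bD).Nonempty := by
  have hA : aA ≤ bA := nonempty_Icc.1 (hAB.mono inter_subset_left)
  have hC : aC ≤ bC := nonempty_Icc.1 (hBC.mono inter_subset_right)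
  rw [Icc_inter_Icc, nonempty_Icc, sup_le_iff, le_inf_iff, le_inf_iff] at hAC
  rcases le_total bA aC with hAleC | hCleA
  · exact ⟨bA, right_mem_Icc_of_inter_nonempty hAB hBC hAleC,
      right_mem_Icc_of_inter_nonempty (inter_comm _ _ ▸ hDA) (inter_comm _ _ ▸ hCD) hAleC⟩
  · have hClA : bC ≤ aA := by
      by_contra! h
      exact hAC ⟨⟨hA, h.le⟩, hCleA, hC⟩
    exact ⟨bC, right_mem_Icc_of_inter_nonempty (inter_comm _ _ ▸ hBC) (inter_comm _ _ ▸ hAB) hClA,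
      right_mem_Icc_of_inter_nonempty hCD hDA hClA⟩

end Intervals

namespace IsIntervalGraph

variable {V : Type*} {G : SimpleGraph V}

theorem adj_of_fourCycle (hG : IsIntervalGraph G) {a b c d : V} (hab : G.Adj a b)
    (hbc : G.Adj b c) (hcd : G.Adj c d) (hda : G.Adj d a) (hac : a ≠ c) (hnac : ¬G.Adj a c)
    (hbd : b ≠ d) : G.Adj b d := by
  obtain ⟨l, r, hlr⟩ := hG
  rw [hlr _ _ hab.ne] at hab
  rw [hlr _ _ hbc.ne] at hbc
  rw [hlr _ _ hcd.ne] at hcd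
  rw [hlr _ _ hda.ne] at hda
  rw [hlr _ _ hac] at hnac
  exact (hlr _ _ hbd).2 (Icc_inter_Icc_nonempty_of_fourCycle hab hbc hcd hda hnac)

end IsIntervalGraph

theorem isIntervalGraph_top_sdiff_edge {V : Type*} [DecidableEq V] {p q : V} (hpq : p ≠ q) :
    IsIntervalGraph ((⊤ : SimpleGraph V) \ edge p q) := by
  refine ⟨fun v => if v = q then 1 else 0, fun v => if v = p then 0 else 1, fun u v huv => ?_⟩
  rw [sdiff_adj, edge_adj, Icc_inter_Icc, nonempty_Icc]
  by_cases hup : u = p <;> by_cases huq : u = q <;> by_cases hvp : v = p <;>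
    by_cases hvq : v = q <;> simp_all

theorem boxicity_eq_sInf_iInf {V : Type*} (G : SimpleGraph V) :
    boxicity G = sInf {d : ℕ | ∃ I : Fin d → SimpleGraph V,
      (∀ i, IsIntervalGraph (I i)) ∧ G = ⨅ i, I i} := by
  simp only [boxicity, SimpleGraph.ext_iff, funext_iff, propext_iff, iInf_adj, and_comm]

theorem robertsGraph_eq_iInf (t : ℕ) :
    robertsGraph t = ⨅ i : Fin t, (⊤ : SimpleGraph (Fin t × Fin 2)) \ edge (i, 0) (i, 1) := by
  ext u v
  simp only [robertsGraph, iInf_adj, sdiff_adj, edge_adj, top_adj]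
  constructor
  · intro huv
    refine ⟨fun i => ⟨fun h => huv (congrArg Prod.fst h), ?_⟩, fun h => huv (congrArg Prod.fst h)⟩
    rintro ⟨⟨rfl, rfl⟩ | ⟨rfl, rfl⟩, -⟩ <;> exact huv rfl
  · rintro ⟨hall, hne⟩ h1
    obtain ⟨u1, u2⟩ := u
    obtain ⟨v1, v2⟩ := v
    simp only at h1
    subst h1
    refine (hall u1).2 ⟨?_, hne⟩
    fin_cases u2 <;> fin_cases v2 <;> simp_all

theorem le_of_robertsGraph_eq_iInf {t d : ℕ} {I : Fin d → SimpleGraph (Fin t × Fin 2)}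
    (hI : ∀ j, IsIntervalGraph (I j)) (hR : robertsGraph t = ⨅ j, I j) : t ≤ d := by
  have adj_of_fst_ne : ∀ j {u v : Fin t × Fin 2}, u.1 ≠ v.1 → (I j).Adj u v := by
    intro j u v huv
    have : (robertsGraph t).Adj u v := huv
    rw [hR, iInf_adj] at this
    exact this.1 j
  have missed : ∀ i : Fin t, ∃ j, ¬(I j).Adj (i, 0) (i, 1) := by
    intro i
    by_contra! h
    have : (robertsGraph t).Adj (i, 0) (i, 1) := by
      rw [hR, iInf_adj]
      exact ⟨h, by simp⟩
    exact this rfl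
  choose f hf using missed
  have hf_inj : f.Injective := by
    intro i i' hii'
    by_contra hne
    refine hf i' (hii' ▸ (hI (f i)).adj_of_fourCycle (a := (i, 0)) (c := (i, 1))
      (adj_of_fst_ne _ hne) (adj_of_fst_ne _ (Ne.symm hne)) (adj_of_fst_ne _ hne)
      (adj_of_fst_ne _ (Ne.symm hne)) (by simp) (hf i) (by simp))
  simpa using Fintype.card_le_of_injective f hf_inj

theorem stmt_5_general (t : ℕ) : boxicity (robertsGraph t) = t := by
  have h_rep : ∃ I : Fin t → SimpleGraph (Fin t × Fin 2),
      (∀ i, IsIntervalGraph (I i)) ∧ robertsGraph t = ⨅ i, I i :=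
    ⟨_, fun _ => isIntervalGraph_top_sdiff_edge (by simp), robertsGraph_eq_iInf t⟩
  rw [boxicity_eq_sInf_iInf]
  exact le_antisymm (Nat.sInf_le h_rep)
    (le_csInf ⟨t, h_rep⟩ fun _ ⟨_, hI, hR⟩ => le_of_robertsGraph_eq_iInf hI hR)

theorem stmt_5 (t : ℕ) (ht : 1 ≤ t) : boxicity (robertsGraph t) = t :=
  stmt_5_general t
end

section
/- Let N = p_1^{n_1} ··· p_a^{n_a} with a ≥ 2. Then the boxicity of the zero divisor graph Γ(Z_N) is at most a; moreover the threshold dimension of Γ(Z_N) is at most a. -/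
def zeroDivisorGraph (R : Type*) [CommRing R] :
    SimpleGraph {x : R // x ≠ 0 ∧ ∃ y : R, y ≠ 0 ∧ x * y = 0} :=
  SimpleGraph.fromRel (fun a b => (a : R) * (b : R) = 0)

section NatThreshold

variable {V : Type*}

def natThresholdGraph (S : ℕ) (w : V → ℕ) : SimpleGraph V :=
  SimpleGraph.fromRel fun u v => S ≤ w u + w v

theorem natThresholdGraph_adj {S : ℕ} {w : V → ℕ} {u v : V} :
    (natThresholdGraph S w).Adj u v ↔ u ≠ v ∧ S ≤ w u + w v := by
  simp [natThresholdGraph, add_comm (w v)]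

theorem isThresholdGraph_natThresholdGraph (S : ℕ) (w : V → ℕ) :
    IsThresholdGraph (natThresholdGraph S w) :=
  ⟨fun x => w x, S, fun u v huv => by simp [natThresholdGraph_adj, huv]; norm_cast⟩

theorem exists_injective_mem_Ico_natCast [Countable V] (w : V → ℕ) :
    ∃ q : V → ℝ, Function.Injective q ∧ ∀ x, q x ∈ Set.Ico (w x : ℝ) (w x + 1) := by
  obtain ⟨f, hf⟩ := exists_injective_nat V
  have hmem : ∀ x, (w x : ℝ) + 1 / (f x + 2) ∈ Set.Ico (w x : ℝ) (w x + 1) := fun x =>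
    ⟨by simp only [le_add_iff_nonneg_right]; positivity,
      by gcongr; rw [div_lt_one (by positivity)]; linarith [(f x).cast_nonneg (α := ℝ)]⟩
  refine ⟨fun x => w x + 1 / (f x + 2), fun u v huv => hf ?_, hmem⟩
  have hw : w u = w v := by
    rw [← Nat.floor_eq_on_Ico _ _ (hmem u), ← Nat.floor_eq_on_Ico _ _ (hmem v)]
    exact congrArg Nat.floor huv
  simpa [hw] using huv

/-- The vertices with `S ≤ 2 * w x` form a clique and get the intervals `[S - w x, S]`; the others
are pairwise non-adjacent and get distinct points `q x` with `⌊q x⌋₊ = w x`. -/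
theorem isIntervalGraph_natThresholdGraph [Countable V] (S : ℕ) (w : V → ℕ) :
    IsIntervalGraph (natThresholdGraph S w) := by
  obtain ⟨q, hq_inj, hq⟩ := exists_injective_mem_Ico_natCast w
  have sub_le_q_iff : ∀ x v, (S : ℝ) - w x ≤ q v ↔ S ≤ w x + w v := fun x v => by
    constructor
    · intro h
      have : (S : ℝ) < w x + w v + 1 := by linarith [(hq v).2]
      exact_mod_cast Nat.lt_succ_iff.1 (by exact_mod_cast this)
    · intro h
      have : (S : ℝ) ≤ w x + w v := by exact_mod_cast h
      linarith [(hq v).1]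
  have q_le_of_small : ∀ v, ¬ S ≤ 2 * w v → q v ≤ S := fun v hv => by
    have : (w v : ℝ) + 1 ≤ S := by exact_mod_cast (by omega : w v + 1 ≤ S)
    linarith [(hq v).2]
  let lo x := if S ≤ 2 * w x then (S : ℝ) - w x else q x
  let hi x := if S ≤ 2 * w x then (S : ℝ) else q x
  refine ⟨lo, hi, fun u v huv => ?_⟩
  rw [natThresholdGraph_adj, Set.Icc_inter_Icc, Set.nonempty_Icc, max_le_iff, le_min_iff,
    le_min_iff]
  by_cases hu : S ≤ 2 * w u <;> by_cases hv : S ≤ 2 * w v <;>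
    simp only [lo, hi, hu, hv, if_true, if_false, huv, ne_eq, not_false_eq_true, true_and]
  · exact iff_of_true (by omega) (by simp)
  · simp [sub_le_q_iff, q_le_of_small v hv]
  · rw [add_comm]
    simp [sub_le_q_iff, q_le_of_small u hu]
  · exact iff_of_false (by omega) fun h => huv (hq_inj (le_antisymm h.1.2 h.2.1))

end NatThreshold

section IntersectionOfThresholds

variable {V : Type*} {d : ℕ} {G : SimpleGraph V} {S : Fin d → ℕ} {w : Fin d → V → ℕ}

theorem adj_iff_forall_natThresholdGraph_adj
    (hG : ∀ u v, G.Adj u v ↔ u ≠ v ∧ ∀ i, S i ≤ w i u + w i v) (u v : V) :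
    G.Adj u v ↔ u ≠ v ∧ ∀ i, (natThresholdGraph (S i) (w i)).Adj u v := by
  simp only [hG, natThresholdGraph_adj]
  exact and_congr_right fun huv => forall_congr' fun _ => (and_iff_right huv).symm

theorem thresholdDim_le_of_adj_iff
    (hG : ∀ u v, G.Adj u v ↔ u ≠ v ∧ ∀ i, S i ≤ w i u + w i v) : thresholdDim G ≤ d :=
  Nat.sInf_le ⟨_, fun i => isThresholdGraph_natThresholdGraph (S i) (w i),
    adj_iff_forall_natThresholdGraph_adj hG⟩

theorem boxicity_le_of_adj_iff [Countable V]
    (hG : ∀ u v, G.Adj u v ↔ u ≠ v ∧ ∀ i, S i ≤ w i u + w i v) : boxicity G ≤ d :=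
  Nat.sInf_le ⟨_, fun i => isIntervalGraph_natThresholdGraph (S i) (w i),
    adj_iff_forall_natThresholdGraph_adj hG⟩

end IntersectionOfThresholds

theorem zeroDivisorGraph_adj {R : Type*} [CommRing R] {u v} :
    (zeroDivisorGraph R).Adj u v ↔ u ≠ v ∧ (u : R) * v = 0 := by
  simp [zeroDivisorGraph, mul_comm (v : R)]

theorem ZMod.mul_eq_zero_iff_dvd_val_mul {N : ℕ} [NeZero N] (x y : ZMod N) :
    x * y = 0 ↔ N ∣ x.val * y.val := by
  rw [← ZMod.natCast_eq_zero_iff, Nat.cast_mul, ZMod.natCast_zmod_val, ZMod.natCast_zmod_val]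

theorem Nat.prod_pow_dvd_iff {ι : Type*} [Fintype ι] {p : ι → ℕ} (hp : ∀ i, (p i).Prime)
    (hinj : Function.Injective p) (n : ι → ℕ) {m : ℕ} (hm : m ≠ 0) :
    ∏ i, p i ^ n i ∣ m ↔ ∀ i, n i ≤ m.factorization (p i) := by
  simp_rw [← (hp _).pow_dvd_iff_le_factorization hm]
  refine ⟨fun h i => (Finset.dvd_prod_of_mem _ (Finset.mem_univ i)).trans h, fun h => ?_⟩
  rw [← Int.natCast_dvd_natCast, Nat.cast_prod]
  refine Fintype.prod_dvd_of_coprime (fun i j hij => ?_) fun i => Int.natCast_dvd_natCast.2 (h i)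
  exact Nat.isCoprime_iff_coprime.2 (Nat.coprime_pow_primes _ _ (hp i) (hp j) (hinj.ne hij))

theorem zeroDivisorGraph_zmod_adj_iff {ι : Type*} [Fintype ι] {p : ι → ℕ}
    (hp : ∀ i, (p i).Prime) (hinj : Function.Injective p) (n : ι → ℕ)
    [NeZero (∏ i, p i ^ n i)] (u v) :
    (zeroDivisorGraph (ZMod (∏ i, p i ^ n i))).Adj u v ↔
      u ≠ v ∧ ∀ i, n i ≤ u.1.val.factorization (p i) + v.1.val.factorization (p i) := by
  have hu := (ZMod.val_ne_zero u.1).2 u.2.1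
  have hv := (ZMod.val_ne_zero v.1).2 v.2.1
  rw [zeroDivisorGraph_adj, ZMod.mul_eq_zero_iff_dvd_val_mul,
    Nat.prod_pow_dvd_iff hp hinj n (mul_ne_zero hu hv), Nat.factorization_mul hu hv]
  simp only [Finsupp.add_apply]

theorem stmt_9_general (N a : ℕ) (p n : Fin a → ℕ)
    (hp : ∀ i, (p i).Prime) (hmono : StrictMono p)
    (hN : N = ∏ i, p i ^ n i) :
    boxicity (zeroDivisorGraph (ZMod N)) ≤ a ∧
    thresholdDim (zeroDivisorGraph (ZMod N)) ≤ a := by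
  subst hN
  have : NeZero (∏ i, p i ^ n i) :=
    ⟨(Finset.prod_pos fun i _ => pow_pos (hp i).pos _).ne'⟩
  have hG := zeroDivisorGraph_zmod_adj_iff hp hmono.injective n
  exact ⟨boxicity_le_of_adj_iff hG, thresholdDim_le_of_adj_iff hG⟩

theorem stmt_9 (N a : ℕ) (p n : Fin a → ℕ) (ha : 2 ≤ a)
    (hp : ∀ i, (p i).Prime) (hmono : StrictMono p) (hn : ∀ i, 0 < n i)
    (hN : N = ∏ i, p i ^ n i) :
    boxicity (zeroDivisorGraph (ZMod N)) ≤ a ∧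
    thresholdDim (zeroDivisorGraph (ZMod N)) ≤ a :=
  stmt_9_general N a p n hp hmono hN
end

section
/- Let R' = (Z/2)^k with k ≥ 2. Then box(Γ(R')) ≤ k: for each coordinate i, letting A_i be the set of vertices with i-th coordinate 1, and assigning vertex v a point interval [g(v), g(v)] ⊆ [0,1] (g injective) if v ∈ A_i and the interval [0,1] otherwise, yields k interval graphs whose edge intersection equals E(Γ(R')). -/
/-!
In `Π i, R i` with every `R i` a domain, `u * v = 0` iff for every coordinate `i` one of
`u i`, `v i` vanishes, so the zero-divisor graph is the intersection over `i` of the graphs in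
which `u, v` are adjacent iff `u i = 0 ∨ v i = 0`. Each of these is an interval graph: a vertex
with `v i ≠ 0` gets a point interval `{g v}` for an injective `g`, which makes these vertices
pairwise non-adjacent, and every other vertex gets an interval containing all the points.
-/

open SimpleGraph

theorem isIntervalGraph_fromRel_or {V : Type*} [Finite V] (P : V → Prop) :
    IsIntervalGraph (fromRel fun u v : V => P u ∨ P v) := by
  classical
  obtain ⟨n, ⟨e⟩⟩ := Finite.exists_equiv_fin V
  let g : V → ℝ := fun v => (e v : ℕ)
  have hg : ∀ v, g v ∈ Set.Icc (0 : ℝ) n := fun v =>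
    ⟨Nat.cast_nonneg _, Nat.cast_le.mpr (e v).is_lt.le⟩
  let a : V → ℝ := fun v => if P v then 0 else g v
  let b : V → ℝ := fun v => if P v then n else g v
  have hab : ∀ w, Set.Icc (a w) (b w) = if P w then Set.Icc 0 (n : ℝ) else {g w} := by
    intro w
    by_cases hw : P w <;> simp [a, b, hw]
  refine ⟨a, b, fun u v huv => ?_⟩
  rw [hab, hab, fromRel_adj]
  by_cases hu : P u <;> by_cases hv : P v <;> simp only [hu, hv, if_true, if_false]
  · have h0 : (0 : ℝ) ∈ Set.Icc 0 (n : ℝ) := Set.left_mem_Icc.2 (Nat.cast_nonneg n)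
    exact iff_of_true (by simp [huv]) ⟨0, h0, h0⟩
  · exact iff_of_true (by simp [huv]) ⟨g v, hg v, rfl⟩
  · exact iff_of_true (by simp [huv]) ⟨g u, rfl, hg u⟩
  · simp only [or_self, and_false, false_iff, Set.singleton_inter_nonempty,
      Set.mem_singleton_iff]
    exact fun h => huv (e.injective (Fin.ext (Nat.cast_injective h)))

theorem zeroDivisorGraph_pi_adj_iff {ι : Type*} {R : ι → Type*} [∀ i, CommRing (R i)]
    [∀ i, NoZeroDivisors (R i)] {u v : {x : (Π i, R i) // x ≠ 0 ∧ ∃ y, y ≠ 0 ∧ x * y = 0}} :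
    (zeroDivisorGraph (Π i, R i)).Adj u v ↔ u ≠ v ∧ ∀ i, u.1 i = 0 ∨ v.1 i = 0 := by
  simp only [zeroDivisorGraph, fromRel_adj]
  rw [mul_comm (v : Π i, R i), or_self]
  simp only [funext_iff, Pi.mul_apply, Pi.zero_apply, mul_eq_zero]

theorem boxicity_zeroDivisorGraph_pi_le {k : ℕ} {R : Fin k → Type*} [∀ i, CommRing (R i)]
    [∀ i, NoZeroDivisors (R i)] [∀ i, Finite (R i)] :
    boxicity (zeroDivisorGraph (Π i, R i)) ≤ k := by
  refine Nat.sInf_le ⟨fun i => fromRel fun u v => u.1 i = 0 ∨ v.1 i = 0,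
    fun i => isIntervalGraph_fromRel_or _, fun u v => ?_⟩
  rw [zeroDivisorGraph_pi_adj_iff]
  refine and_congr_right fun huv => forall_congr' fun i => ?_
  rw [fromRel_adj, or_comm (a := (v : Π i, R i) i = 0), or_self, and_iff_right huv]

theorem stmt_17_general (k : ℕ) :
    boxicity (zeroDivisorGraph (Fin k → ZMod 2)) ≤ k :=
  boxicity_zeroDivisorGraph_pi_le

theorem stmt_17 (k : ℕ) (hk : 2 ≤ k) :
    boxicity (zeroDivisorGraph (Fin k → ZMod 2)) ≤ k :=
  stmt_17_general k
end

section
/- Let N = p_1^{n_1} ··· p_a^{n_a} with a ≥ 2 and p_1 the smallest prime divisor. The set { p_1·u : 1 ≤ u < √(N/p_1^2) } is an independent set in Γ(Z_N) of size at least ⌊√(N/p_1^2)⌋ - 1; hence the independence number of Γ(Z_N) is at least ⌊√(N/p_1^2)⌋ - 1. -/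
/-!
Every element `p₁ u` of the set is annihilated by `N / p₁`, so it is a zero divisor. Two elements
`x, y` of the set both satisfy `x² < N` and `y² < N`, hence `0 < x y < N`, and `N` cannot divide
`x y`. The set is the injective image of `u ∈ [1, ⌈√(N / p₁²)⌉)` under `u ↦ p₁ u`.
-/

namespace ZeroDivisorGraph

theorem not_dvd_mul_of_sq_lt {N x y : ℕ} (hx : 0 < x) (hy : 0 < y) (hxN : x ^ 2 < N)
    (hyN : y ^ 2 < N) : ¬ N ∣ x * y := by
  have hlt : x * y < N := by
    rcases le_total x y with h | h <;> nlinarith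
  exact fun hdvd => absurd (Nat.le_of_dvd (Nat.mul_pos hx hy) hdvd) (not_le.mpr hlt)

theorem exists_mul_dvd_of_dvd {N p x : ℕ} (hN : 0 < N) (hp : 2 ≤ p) (hpN : p ∣ N) (hpx : p ∣ x) :
    ∃ y, 1 ≤ y ∧ y < N ∧ N ∣ x * y := by
  obtain ⟨u, rfl⟩ := hpx
  refine ⟨N / p, (Nat.one_le_div_iff (by omega)).mpr (Nat.le_of_dvd hN hpN),
    Nat.div_lt_self hN hp, ⟨u, ?_⟩⟩
  rw [mul_comm p u, mul_assoc, Nat.mul_div_cancel' hpN, mul_comm]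

theorem lt_sqrt_div_sq_iff {N c u : ℕ} (hc : 0 < c) :
    (u : ℝ) < Real.sqrt ((N : ℝ) / (c : ℝ) ^ 2) ↔ (c * u) ^ 2 < N := by
  rw [Real.lt_sqrt (by positivity), lt_div_iff₀ (by positivity), ← mul_pow, mul_comm]
  exact_mod_cast Iff.rfl

theorem setOf_mul_eq_image_Ico (c : ℕ) (B : ℝ) :
    {m : ℕ | ∃ u : ℕ, 1 ≤ u ∧ (u : ℝ) < B ∧ m = c * u} =
      ↑((Finset.Ico 1 ⌈B⌉₊).image (c * ·)) := by
  ext m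
  simp only [Finset.coe_image, Finset.coe_Ico, Set.mem_image, Set.mem_Ico, Set.mem_ofPred_eq,
    Nat.lt_ceil, and_assoc, eq_comm]

theorem floor_sub_one_le_ncard_setOf_mul {c : ℕ} (hc : 0 < c) (B : ℝ) :
    ⌊B⌋₊ - 1 ≤ {m : ℕ | ∃ u : ℕ, 1 ≤ u ∧ (u : ℝ) < B ∧ m = c * u}.ncard := by
  rw [setOf_mul_eq_image_Ico, Set.ncard_coe_finset,
    Finset.card_image_of_injective _ (mul_right_injective₀ hc.ne'), Nat.card_Ico]
  have := Nat.floor_le_ceil B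
  omega

end ZeroDivisorGraph

open ZeroDivisorGraph in
theorem stmt_19 (N a : ℕ) (p n : Fin a → ℕ) (ha : 2 ≤ a)
    (hp : ∀ i, (p i).Prime) (hn : ∀ i, 0 < n i)
    (hN : N = ∏ i, p i ^ n i)
    (p1 : ℕ) (hp1 : p1 = p ⟨0, by omega⟩)
    (s : Set ℕ)
    (hs : s = {m : ℕ | ∃ u : ℕ, 1 ≤ u ∧
      (u : ℝ) < Real.sqrt ((N : ℝ) / (p1 : ℝ) ^ 2) ∧ m = p1 * u}) :
    -- every element of s is a nonzero zero divisor of Z_N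
    (∀ x ∈ s, 1 ≤ x ∧ x < N ∧ ∃ y, 1 ≤ y ∧ y < N ∧ N ∣ x * y) ∧
    -- s is an independent set in Γ(Z_N)
    (∀ x ∈ s, ∀ y ∈ s, x ≠ y → ¬ N ∣ x * y) ∧
    -- s has size at least ⌊√(N/p1²)⌋ - 1
    ⌊Real.sqrt ((N : ℝ) / (p1 : ℝ) ^ 2)⌋₊ - 1 ≤ s.ncard := by
  have hp1prime : p1.Prime := hp1 ▸ hp _
  have hNpos : 0 < N := hN ▸ Finset.prod_pos fun i _ => pow_pos (hp i).pos _
  have hp1N : p1 ∣ N := hN ▸ hp1 ▸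
    (dvd_pow_self _ (hn _).ne').trans (Finset.dvd_prod_of_mem _ (Finset.mem_univ _))
  have hmem : ∀ x ∈ s, 0 < x ∧ p1 ∣ x ∧ x ^ 2 < N := by
    intro x hx
    obtain ⟨u, hu, huB, rfl⟩ := hs ▸ hx
    exact ⟨Nat.mul_pos hp1prime.pos hu, dvd_mul_right _ _,
      (lt_sqrt_div_sq_iff hp1prime.pos).mp huB⟩
  refine ⟨fun x hx => ?_, fun x hx y hy _ => ?_, hs ▸ floor_sub_one_le_ncard_setOf_mul hp1prime.pos _⟩
  · obtain ⟨hx0, hp1x, hxN⟩ := hmem x hx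
    exact ⟨hx0, lt_of_le_of_lt (Nat.le_self_pow two_ne_zero x) hxN,
      exists_mul_dvd_of_dvd hNpos hp1prime.two_le hp1N hp1x⟩
  · exact not_dvd_mul_of_sq_lt (hmem x hx).1 (hmem y hy).1 (hmem x hx).2.2 (hmem y hy).2.2
end
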